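/- Let n ≥ 1, let W ∈ ℝ^{n×n} satisfy W·1_n = 1_n, 1_nᵀ·W = 1_nᵀ, and ‖W − I‖₂ ≤ 2. Let X, V ∈ ℝ^{p×n}, let η > 0, and define X⁺ = X·W − η·V. Write x̄ = (1/n)·X·1_n and v̄ = (1/n)·V·1_n. Then ‖X⁺ − X‖_F² ≤ 8·‖X − x̄·1_nᵀ‖_F² + 2η²·‖V − v̄·1_nᵀ‖_F² + 2·n·η²·‖v̄‖². -/

import Mathlib

/-- The Frobenius norm of a real matrix. -/
noncomputable def frobeniusNorm {m n : ℕ} (A : Matrix (Fin m) (Fin n) ℝ) : ℝ :=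
  Real.sqrt (∑ i, ∑ j, (A i j) ^ 2)

/-- The spectral norm of a real matrix: the operator norm of the induced linear map between
Euclidean spaces. -/
noncomputable def spectralNorm' {m n : ℕ} (A : Matrix (Fin m) (Fin n) ℝ) : ℝ :=
  ‖LinearMap.toContinuousLinearMap (Matrix.toEuclideanLin A)‖

/-- The average of the columns of a matrix: `(1/n) • A • 1ₙ`. -/
noncomputable def colAvg {q n : ℕ} (A : Matrix (Fin q) (Fin n) ℝ) : Fin q → ℝ :=
  (n : ℝ)⁻¹ • A.mulVec (fun _ => 1)

/-- The consensus error of a matrix of stacked iterates: `A - ā·1ₙᵀ`. -/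
noncomputable def consensusErr {q n : ℕ} (A : Matrix (Fin q) (Fin n) ℝ) :
    Matrix (Fin q) (Fin n) ℝ :=
  A - Matrix.vecMulVec (colAvg A) (fun _ => 1)

open Matrix
open scoped Matrix.Norms.L2Operator

lemma spectralNorm_eq_l2 {m n : ℕ} (A : Matrix (Fin m) (Fin n) ℝ) : spectralNorm' A = ‖A‖ := rfl

lemma spectralNorm_nonneg' {m n : ℕ} (A : Matrix (Fin m) (Fin n) ℝ) : 0 ≤ spectralNorm' A :=
  norm_nonneg _

lemma spectralNorm_transpose {m n : ℕ} (A : Matrix (Fin m) (Fin n) ℝ) :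
    spectralNorm' Aᵀ = spectralNorm' A := by
  have hT : Aᵀ = Aᴴ := by
    ext i j
    simp [Matrix.conjTranspose_apply]
  rw [spectralNorm_eq_l2, spectralNorm_eq_l2, hT, Matrix.l2_opNorm_conjTranspose]

lemma mulVec_sq_le {m n : ℕ} (A : Matrix (Fin m) (Fin n) ℝ) (v : Fin n → ℝ) :
    ∑ i, (A.mulVec v) i ^ 2 ≤ spectralNorm' A ^ 2 * ∑ j, v j ^ 2 := by
  have h := Matrix.l2_opNorm_mulVec A ((EuclideanSpace.equiv (Fin n) ℝ).symm v)
  have hx : ‖((EuclideanSpace.equiv (Fin n) ℝ).symm v : EuclideanSpace ℝ (Fin n))‖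
      = Real.sqrt (∑ j, v j ^ 2) := by
    rw [EuclideanSpace.norm_eq]
    congr 1
    refine Finset.sum_congr rfl fun j _ => ?_
    simp [Real.norm_eq_abs, sq_abs]
  have hy : ‖((EuclideanSpace.equiv (Fin m) ℝ).symm
      (A.mulVec ((EuclideanSpace.equiv (Fin n) ℝ) ((EuclideanSpace.equiv (Fin n) ℝ).symm v)))
      : EuclideanSpace ℝ (Fin m))‖ = Real.sqrt (∑ i, (A.mulVec v) i ^ 2) := by
    rw [EuclideanSpace.norm_eq]
    congr 1
    refine Finset.sum_congr rfl fun i _ => ?_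
    simp [Real.norm_eq_abs, sq_abs]; rfl
  have h2 : Real.sqrt (∑ i, (A.mulVec v) i ^ 2) ≤ ‖A‖ * Real.sqrt (∑ j, v j ^ 2) := by
    rw [← hx, ← hy]; exact h
  have hs1 : (0 : ℝ) ≤ ∑ i, (A.mulVec v) i ^ 2 := Finset.sum_nonneg fun _ _ => sq_nonneg _
  have hs2 : (0 : ℝ) ≤ ∑ j, v j ^ 2 := Finset.sum_nonneg fun _ _ => sq_nonneg _
  have := pow_le_pow_left₀ (Real.sqrt_nonneg _) h2 2
  rw [Real.sq_sqrt hs1, mul_pow, Real.sq_sqrt hs2, ← spectralNorm_eq_l2] at this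
  exact this

lemma frob_sq_mul_le {p n : ℕ} (E : Matrix (Fin p) (Fin n) ℝ) (B : Matrix (Fin n) (Fin n) ℝ) :
    ∑ i, ∑ j, ((E * B) i j) ^ 2 ≤ spectralNorm' B ^ 2 * ∑ i, ∑ j, (E i j) ^ 2 := by
  calc ∑ i, ∑ j, ((E * B) i j) ^ 2
      = ∑ i, ∑ j, ((Bᵀ.mulVec (fun k => E i k)) j) ^ 2 := by
        refine Finset.sum_congr rfl fun i _ => Finset.sum_congr rfl fun j _ => ?_
        simp [Matrix.mul_apply, Matrix.mulVec, dotProduct, Matrix.transpose_apply,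
          mul_comm]
    _ ≤ ∑ i, (spectralNorm' Bᵀ ^ 2 * ∑ k, (E i k) ^ 2) :=
        Finset.sum_le_sum fun i _ => mulVec_sq_le Bᵀ _
    _ = spectralNorm' B ^ 2 * ∑ i, ∑ j, (E i j) ^ 2 := by
        rw [Finset.mul_sum]
        refine Finset.sum_congr rfl fun i _ => ?_
        rw [spectralNorm_transpose]

lemma colAvg_eq {q n : ℕ} (A : Matrix (Fin q) (Fin n) ℝ) (i : Fin q) :
    colAvg A i = (n : ℝ)⁻¹ * ∑ j, A i j := by
  simp [colAvg, Matrix.mulVec, dotProduct]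

lemma consensusErr_row_sum {q n : ℕ} (hn : 0 < n) (A : Matrix (Fin q) (Fin n) ℝ) (i : Fin q) :
    ∑ j, consensusErr A i j = 0 := by
  have hn' : (n : ℝ) ≠ 0 := Nat.cast_ne_zero.mpr hn.ne'
  simp only [consensusErr, Matrix.sub_apply, Matrix.vecMulVec_apply, mul_one,
    Finset.sum_sub_distrib, Finset.sum_const, Finset.card_univ, Fintype.card_fin, nsmul_eq_mul]
  rw [colAvg_eq]
  field_simp
  ring

lemma pythagoras {q n : ℕ} (hn : 0 < n) (A : Matrix (Fin q) (Fin n) ℝ) :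
    ∑ i, ∑ j, (A i j) ^ 2
      = (∑ i, ∑ j, (consensusErr A i j) ^ 2) + n * ∑ i, (colAvg A i) ^ 2 := by
  have key : ∀ i, ∑ j, (A i j) ^ 2
      = (∑ j, (consensusErr A i j) ^ 2) + n * (colAvg A i) ^ 2 := by
    intro i
    have hA : ∀ j, A i j = consensusErr A i j + colAvg A i := by
      intro j; simp [consensusErr, Matrix.vecMulVec_apply]
    calc ∑ j, (A i j) ^ 2 = ∑ j, ((consensusErr A i j) ^ 2
          + (2 * colAvg A i) * consensusErr A i j + (colAvg A i) ^ 2) := by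
          refine Finset.sum_congr rfl fun j _ => ?_
          rw [hA j]; ring
      _ = (∑ j, (consensusErr A i j) ^ 2)
          + (2 * colAvg A i) * (∑ j, consensusErr A i j) + n * (colAvg A i) ^ 2 := by
          rw [Finset.sum_add_distrib, Finset.sum_add_distrib, ← Finset.mul_sum]
          simp [Finset.card_univ]
      _ = (∑ j, (consensusErr A i j) ^ 2) + n * (colAvg A i) ^ 2 := by
          rw [consensusErr_row_sum hn A i]; ring
  calc ∑ i, ∑ j, (A i j) ^ 2
      = ∑ i, ((∑ j, (consensusErr A i j) ^ 2) + n * (colAvg A i) ^ 2) :=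
        Finset.sum_congr rfl fun i _ => key i
    _ = (∑ i, ∑ j, (consensusErr A i j) ^ 2) + n * ∑ i, (colAvg A i) ^ 2 := by
        rw [Finset.sum_add_distrib, Finset.mul_sum]

theorem iterate_movement_bound (n p : ℕ) (hn : 0 < n)
    (W : Matrix (Fin n) (Fin n) ℝ)
    (hWr : W.mulVec (fun _ => 1) = fun _ => 1)
    (hWc : Matrix.vecMul (fun _ => 1) W = fun _ => 1)
    (hWI : spectralNorm' (W - 1) ≤ 2)
    (X V : Matrix (Fin p) (Fin n) ℝ) (η : ℝ) (hη : 0 < η) :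
    frobeniusNorm ((X * W - η • V) - X) ^ 2 ≤
      8 * frobeniusNorm (consensusErr X) ^ 2 +
        2 * η ^ 2 * frobeniusNorm (consensusErr V) ^ 2 +
          2 * n * η ^ 2 * ∑ i, (colAvg V i) ^ 2 := by
  -- rewrite Frobenius norms squared as sums
  have frob_sq : ∀ {q r : ℕ} (A : Matrix (Fin q) (Fin r) ℝ),
      frobeniusNorm A ^ 2 = ∑ i, ∑ j, (A i j) ^ 2 := by
    intro q r A
    exact Real.sq_sqrt (Finset.sum_nonneg fun _ _ => Finset.sum_nonneg fun _ _ => sq_nonneg _)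
  -- the key identity : X * (W - 1) = consensusErr X * (W - 1)
  have hzero : Matrix.vecMulVec (colAvg X) (fun (_ : Fin n) => (1:ℝ)) * (W - 1) = 0 := by
    ext i j
    simp only [Matrix.mul_apply, Matrix.vecMulVec_apply, Matrix.zero_apply]
    have : ∑ k, colAvg X i * 1 * (W - 1) k j
        = colAvg X i * ∑ k, (fun _ => (1:ℝ)) k * (W - 1) k j := by
      rw [Finset.mul_sum]; refine Finset.sum_congr rfl fun k _ => by ring
    rw [this]
    have hv : Matrix.vecMul (fun _ => (1:ℝ)) (W - 1) = 0 := by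
      rw [Matrix.vecMul_sub, hWc, Matrix.vecMul_one]
      simp
    have : ∑ k, (fun _ => (1:ℝ)) k * (W - 1) k j = Matrix.vecMul (fun _ => (1:ℝ)) (W - 1) j := by
      simp [Matrix.vecMul, dotProduct]
    rw [this, hv]
    simp
  have hXW : X * W - X = consensusErr X * (W - 1) := by
    have : consensusErr X * (W - 1)
        = X * (W - 1) - Matrix.vecMulVec (colAvg X) (fun (_ : Fin n) => (1:ℝ)) * (W - 1) := by
      rw [consensusErr, Matrix.sub_mul]
    rw [this, hzero, sub_zero, Matrix.mul_sub, Matrix.mul_one]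
  -- entrywise bound
  set M := consensusErr X * (W - 1) with hM
  have hD : (X * W - η • V) - X = M - η • V := by
    rw [← hXW]
    rw [sub_right_comm]
  have step1 : ∑ i, ∑ j, (((X * W - η • V) - X) i j) ^ 2
      ≤ 2 * (∑ i, ∑ j, (M i j) ^ 2) + 2 * η ^ 2 * ∑ i, ∑ j, (V i j) ^ 2 := by
    rw [hD]
    have : ∀ i j, ((M - η • V) i j) ^ 2 ≤ 2 * (M i j) ^ 2 + 2 * η ^ 2 * (V i j) ^ 2 := by
      intro i j
      have h := sq_nonneg (M i j + η * V i j)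
      simp only [Matrix.sub_apply, Matrix.smul_apply, smul_eq_mul]
      nlinarith [sq_nonneg (M i j - η * V i j)]
    calc ∑ i, ∑ j, ((M - η • V) i j) ^ 2
        ≤ ∑ i, ∑ j, (2 * (M i j) ^ 2 + 2 * η ^ 2 * (V i j) ^ 2) :=
          Finset.sum_le_sum fun i _ => Finset.sum_le_sum fun j _ => this i j
      _ = 2 * (∑ i, ∑ j, (M i j) ^ 2) + 2 * η ^ 2 * ∑ i, ∑ j, (V i j) ^ 2 := by
          rw [Finset.mul_sum, Finset.mul_sum, ← Finset.sum_add_distrib]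
          refine Finset.sum_congr rfl fun i _ => ?_
          rw [Finset.mul_sum, Finset.mul_sum, ← Finset.sum_add_distrib]
  have step2 : ∑ i, ∑ j, (M i j) ^ 2 ≤ 4 * ∑ i, ∑ j, (consensusErr X i j) ^ 2 := by
    have h1 := frob_sq_mul_le (consensusErr X) (W - 1)
    have h2 : spectralNorm' (W - 1) ^ 2 ≤ 4 := by
      nlinarith [spectralNorm_nonneg' (W - 1)]
    have h3 : (0:ℝ) ≤ ∑ i, ∑ j, (consensusErr X i j) ^ 2 :=
      Finset.sum_nonneg fun _ _ => Finset.sum_nonneg fun _ _ => sq_nonneg _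
    calc ∑ i, ∑ j, (M i j) ^ 2
        ≤ spectralNorm' (W - 1) ^ 2 * ∑ i, ∑ j, (consensusErr X i j) ^ 2 := h1
      _ ≤ 4 * ∑ i, ∑ j, (consensusErr X i j) ^ 2 := by
          exact mul_le_mul_of_nonneg_right h2 h3
  have step3 := pythagoras hn V
  rw [frob_sq, frob_sq, frob_sq]
  have hη2 : (0:ℝ) ≤ η ^ 2 := sq_nonneg η
  calc ∑ i, ∑ j, (((X * W - η • V) - X) i j) ^ 2
      ≤ 2 * (∑ i, ∑ j, (M i j) ^ 2) + 2 * η ^ 2 * ∑ i, ∑ j, (V i j) ^ 2 := step1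
    _ ≤ 2 * (4 * ∑ i, ∑ j, (consensusErr X i j) ^ 2) + 2 * η ^ 2 * ∑ i, ∑ j, (V i j) ^ 2 := by
        have := mul_le_mul_of_nonneg_left step2 (by norm_num : (0:ℝ) ≤ 2)
        linarith
    _ = 8 * (∑ i, ∑ j, (consensusErr X i j) ^ 2)
        + 2 * η ^ 2 * ((∑ i, ∑ j, (consensusErr V i j) ^ 2) + n * ∑ i, (colAvg V i) ^ 2) := by
        rw [step3]; ring
    _ = 8 * (∑ i, ∑ j, (consensusErr X i j) ^ 2)
        + 2 * η ^ 2 * (∑ i, ∑ j, (consensusErr V i j) ^ 2)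
        + 2 * n * η ^ 2 * ∑ i, (colAvg V i) ^ 2 := by ring
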